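/- Let Ω ⊊ ℂ be a simply connected domain containing a horizontal half-plane H = {z ∈ ℂ : Im z > a} for some a ∈ ℝ, and let w ∈ H. Then for every biholomorphism f : Ω → 𝔻, limsup_{t → −∞} d_𝔻(f(w), f(w + t))/log(−t) ≤ 1. (This is the upper-bound half of the proof of Theorem 4.3: d_Ω(w, w+t) ≤ d_H(w, w+t) = arctanh(−t/√(4δ² + t²)) with δ = Im w − a, and the latter is asymptotic to log(−t) as t → −∞.) -/

import Mathlib

open Filter Set

/-- The inverse hyperbolic tangent. -/
noncomputable def arctanh (x : ℝ) : ℝ := (1 / 2) * Real.log ((1 + x) / (1 - x))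

/-- The hyperbolic distance of the unit disc:
`d_𝔻(z, w) = arctanh |(z - w)/(1 - conj z · w)|`. -/
noncomputable def dD (z w : ℂ) : ℝ :=
  arctanh ‖(z - w) / (1 - (starRingEnd ℂ) z * w)‖

def unitDisc : Set ℂ := {z : ℂ | ‖z‖ < 1}

/-- `Ω` is a simply connected domain, a proper subdomain of `ℂ`. -/
def IsSCDomain (Ω : Set ℂ) : Prop :=
  IsOpen Ω ∧ IsConnected Ω ∧ Ω ≠ Set.univ ∧ SimplyConnectedSpace Ω

/-!
Precomposing `f` with the Cayley map `ψ ζ = w + 2δiζ/(1 - ζ)`, `δ = Im w - a`, which sends the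
unit disc into the half-plane `{Im z > a}` and `0` to `w`, gives a holomorphic self-map of the
disc. Since `ψ (t/(t + 2δi)) = w + t`, the Schwarz–Pick lemma yields
`d_𝔻(f w, f (w + t)) ≤ arctanh (|t|/√(t² + 4δ²)) ≤ log (1 + |t|/δ)`, and
`log (1 + |t|/δ) / log |t| → 1`.
-/
open Complex ComplexConjugate Metric Topology

lemma unitDisc_eq_ball : unitDisc = ball (0 : ℂ) 1 := by
  ext z; simp [unitDisc]

lemma arctanh_le_arctanh {x y : ℝ} (hx : -1 < x) (hxy : x ≤ y) (hy : y < 1) :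
    arctanh x ≤ arctanh y := by
  rw [arctanh, arctanh, ← Real.artanh_eq_half_log ⟨hx.le, hxy.trans hy.le⟩,
    ← Real.artanh_eq_half_log ⟨hx.le.trans hxy, hy.le⟩]
  exact Real.artanh_le_artanh hx hy hxy

lemma normSq_lt_one_of_norm_lt_one {z : ℂ} (hz : ‖z‖ < 1) : normSq z < 1 := by
  rw [normSq_eq_norm_sq]
  exact pow_lt_one₀ (norm_nonneg z) hz two_ne_zero

noncomputable def mobiusDisc (b z : ℂ) : ℂ := (z - b) / (1 - conj b * z)

lemma normSq_one_sub_conj_mul_sub_normSq_sub (b z : ℂ) :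
    normSq (1 - conj b * z) - normSq (z - b) = (1 - normSq b) * (1 - normSq z) := by
  simp only [normSq_apply, sub_re, sub_im, mul_re, mul_im, conj_re, conj_im, one_re, one_im]
  ring

lemma norm_sub_lt_norm_one_sub_conj_mul {b z : ℂ} (hb : ‖b‖ < 1) (hz : ‖z‖ < 1) :
    ‖z - b‖ < ‖1 - conj b * z‖ := by
  have h := normSq_one_sub_conj_mul_sub_normSq_sub b z
  have hprod := mul_pos (sub_pos.2 (normSq_lt_one_of_norm_lt_one hb))
    (sub_pos.2 (normSq_lt_one_of_norm_lt_one hz))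
  rw [normSq_eq_norm_sq, normSq_eq_norm_sq] at h
  exact lt_of_pow_lt_pow_left₀ 2 (norm_nonneg _) (by linarith)

lemma norm_mobiusDisc_lt_one {b z : ℂ} (hb : ‖b‖ < 1) (hz : ‖z‖ < 1) :
    ‖mobiusDisc b z‖ < 1 := by
  have h := norm_sub_lt_norm_one_sub_conj_mul hb hz
  rw [mobiusDisc, norm_div, div_lt_one ((norm_nonneg _).trans_lt h)]
  exact h

lemma dD_eq_arctanh_norm_mobiusDisc (b z : ℂ) : dD b z = arctanh ‖mobiusDisc b z‖ := by
  rw [dD, mobiusDisc, norm_div, norm_div, norm_sub_rev]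

lemma differentiableOn_mobiusDisc {b : ℂ} (hb : ‖b‖ < 1) :
    DifferentiableOn ℂ (mobiusDisc b) (ball 0 1) := by
  refine (differentiableOn_id.sub_const b).div ((differentiableOn_const 1).sub
    ((differentiableOn_const _).mul differentiableOn_id)) fun z hz ↦ ?_
  have h := norm_sub_lt_norm_one_sub_conj_mul hb (mem_ball_zero_iff.1 hz)
  exact norm_pos_iff.1 ((norm_nonneg _).trans_lt h)

/-- The Schwarz–Pick lemma, at the origin. -/
theorem dD_le_arctanh_norm_of_mapsTo_ball {F : ℂ → ℂ} (hF : DifferentiableOn ℂ F (ball 0 1))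
    (hmaps : MapsTo F (ball 0 1) (ball 0 1)) {ζ : ℂ} (hζ : ‖ζ‖ < 1) :
    dD (F 0) (F ζ) ≤ arctanh ‖ζ‖ := by
  have hF0 : ‖F 0‖ < 1 := mem_ball_zero_iff.1 (hmaps (mem_ball_self one_pos))
  have hG : DifferentiableOn ℂ (mobiusDisc (F 0) ∘ F) (ball 0 1) :=
    (differentiableOn_mobiusDisc hF0).comp hF hmaps
  have hGmaps : MapsTo (mobiusDisc (F 0) ∘ F) (ball 0 1) (closedBall 0 1) := fun z hz ↦
    mem_closedBall_zero_iff.2 (norm_mobiusDisc_lt_one hF0 (mem_ball_zero_iff.1 (hmaps hz))).le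
  have hschwarz := Complex.norm_le_norm_of_mapsTo_ball hG hGmaps (by simp [mobiusDisc]) hζ
  rw [dD_eq_arctanh_norm_mobiusDisc]
  exact arctanh_le_arctanh (by linarith [norm_nonneg (mobiusDisc (F 0) (F ζ))]) hschwarz hζ

noncomputable def halfPlaneChart (w : ℂ) (δ : ℝ) (ζ : ℂ) : ℂ := w + 2 * δ * I * ζ / (1 - ζ)

lemma halfPlaneChart_zero (w : ℂ) (δ : ℝ) : halfPlaneChart w δ 0 = w := by
  simp [halfPlaneChart]

lemma one_sub_ne_zero_of_mem_ball {ζ : ℂ} (hζ : ζ ∈ ball (0 : ℂ) 1) : 1 - ζ ≠ 0 := by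
  intro h
  rw [← sub_eq_zero.1 h] at hζ
  simp at hζ

lemma differentiableOn_halfPlaneChart (w : ℂ) (δ : ℝ) :
    DifferentiableOn ℂ (halfPlaneChart w δ) (ball 0 1) :=
  (differentiableOn_const w).add (((differentiableOn_const _).mul differentiableOn_id).div
    ((differentiableOn_const 1).sub differentiableOn_id) fun _ ↦ one_sub_ne_zero_of_mem_ball)

lemma mapsTo_halfPlaneChart (w : ℂ) {δ : ℝ} (hδ : 0 < δ) :
    MapsTo (halfPlaneChart w δ) (ball 0 1) {z | w.im - δ < z.im} := by
  intro ζ hζ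
  have hN : 0 < normSq (1 - ζ) := normSq_pos.2 (one_sub_ne_zero_of_mem_ball hζ)
  have hζ' := normSq_lt_one_of_norm_lt_one (mem_ball_zero_iff.1 hζ)
  have key : (halfPlaneChart w δ ζ).im - (w.im - δ) = δ * (1 - normSq ζ) / normSq (1 - ζ) := by
    rw [halfPlaneChart, add_im, div_im]
    field_simp
    simp only [normSq_apply, sub_re, sub_im, mul_re, mul_im, one_re, one_im, I_re, I_im,
      ofReal_re, ofReal_im, re_ofNat, im_ofNat]
    ring
  have : 0 < δ * (1 - normSq ζ) / normSq (1 - ζ) := div_pos (mul_pos hδ (by linarith)) hN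
  simp only [mem_ofPred_eq]
  linarith

lemma halfPlaneChart_ofReal_div {δ : ℝ} (hδ : δ ≠ 0) (w : ℂ) (t : ℝ) :
    halfPlaneChart w δ (t / (t + 2 * δ * I)) = w + t := by
  have hδ' : (δ : ℂ) ≠ 0 := ofReal_ne_zero.2 hδ
  have hz : (t + 2 * δ * I : ℂ) ≠ 0 := fun h ↦ hδ (by simpa using congrArg im h)
  rw [halfPlaneChart]
  congr 1
  field_simp [I_ne_zero]
  ring

lemma norm_ofReal_div_add_mul_I (t δ : ℝ) :
    ‖(t / (t + 2 * δ * I) : ℂ)‖ = |t| / √(t ^ 2 + (2 * δ) ^ 2) := by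
  rw [norm_div, norm_real, Real.norm_eq_abs, ← norm_add_mul_I]
  push_cast; ring_nf

lemma arctanh_div_sqrt_le_log {u δ : ℝ} (hu : 0 ≤ u) (hδ : 0 < δ) :
    arctanh (u / √(u ^ 2 + (2 * δ) ^ 2)) ≤ Real.log (1 + u / δ) := by
  set s := √(u ^ 2 + (2 * δ) ^ 2)
  have hs2 : s ^ 2 = u ^ 2 + (2 * δ) ^ 2 := Real.sq_sqrt (by positivity)
  have hus : u < s := by nlinarith [Real.sqrt_nonneg (u ^ 2 + (2 * δ) ^ 2)]
  have hs : 0 < s := hu.trans_lt hus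
  have hsu : s ≤ u + 2 * δ := by nlinarith
  -- `(s + u) (s - u) = (2δ)²`, so the argument of the logarithm is `((s + u) / 2δ)²`
  have hratio : (1 + u / s) / (1 - u / s) ≤ (1 + u / δ) ^ 2 := by
    rw [div_le_iff₀ (by rw [sub_pos, div_lt_one hs]; exact hus)]
    field_simp
    refine le_of_mul_le_mul_right ?_ (by linarith : 0 < s + u)
    have hsq : (s + u) ^ 2 ≤ (2 * (δ + u)) ^ 2 := pow_le_pow_left₀ (by linarith) (by linarith) 2
    nlinarith
  have hpos : 0 < (1 + u / s) / (1 - u / s) := by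
    have : u / s < 1 := (div_lt_one hs).2 hus
    exact div_pos (by positivity) (by linarith)
  calc arctanh (u / s) ≤ 1 / 2 * Real.log ((1 + u / δ) ^ 2) := by
        rw [arctanh]; gcongr
    _ = Real.log (1 + u / δ) := by rw [Real.log_pow]; push_cast; ring

/-- The right-hand side bounds the hyperbolic distance from `w` to `w + t` in the half-plane. -/
theorem dD_le_log_one_add_abs_div {a : ℝ} {f : ℂ → ℂ} (hf : DifferentiableOn ℂ f {z | a < z.im})
    (hmaps : MapsTo f {z | a < z.im} (ball 0 1)) {w : ℂ} (hw : a < w.im) (t : ℝ) :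
    dD (f w) (f (w + t)) ≤ Real.log (1 + |t| / (w.im - a)) := by
  set δ := w.im - a
  have hδ : 0 < δ := sub_pos.2 hw
  have hchart : MapsTo (halfPlaneChart w δ) (ball 0 1) {z | a < z.im} := by
    simpa [δ] using mapsTo_halfPlaneChart w hδ
  set ζ : ℂ := t / (t + 2 * δ * I)
  have hζ : ‖ζ‖ = |t| / √(|t| ^ 2 + (2 * δ) ^ 2) := by
    rw [norm_ofReal_div_add_mul_I, sq_abs]
  have hζ1 : ‖ζ‖ < 1 := by
    rw [hζ, div_lt_one (by positivity), Real.lt_sqrt (abs_nonneg t)]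
    nlinarith
  have hpick := dD_le_arctanh_norm_of_mapsTo_ball (hf.comp (differentiableOn_halfPlaneChart w δ)
    hchart) (hmaps.comp hchart) hζ1
  simp only [Function.comp_apply, halfPlaneChart_zero, ζ, halfPlaneChart_ofReal_div hδ.ne']
    at hpick
  exact hpick.trans (hζ ▸ arctanh_div_sqrt_le_log (abs_nonneg t) hδ)

lemma tendsto_log_one_add_div_div_log {δ : ℝ} (hδ : 0 < δ) :
    Tendsto (fun s ↦ Real.log (1 + s / δ) / Real.log s) atTop (𝓝 1) := by
  have hlim : Tendsto
      (fun s ↦ 1 + ((Real.log (s + δ) - Real.log s) - Real.log δ) * (Real.log s)⁻¹) atTop (𝓝 1) := by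
    simpa using tendsto_const_nhds.add (((Real.tendsto_log_comp_add_sub_log δ).sub
      tendsto_const_nhds).mul Real.tendsto_log_atTop.inv_tendsto_atTop)
  refine hlim.congr' ?_
  filter_upwards [eventually_gt_atTop 1] with s hs
  have hlog : Real.log s ≠ 0 := (Real.log_pos hs).ne'
  rw [show 1 + s / δ = (s + δ) / δ by field_simp; ring, Real.log_div (by linarith) hδ.ne']
  field_simp
  ring

theorem stmt14_general (Ω : Set ℂ) (a : ℝ)
    (hH : {z : ℂ | a < z.im} ⊆ Ω) (w : ℂ) (hw : a < w.im)
    (f : ℂ → ℂ) (hf : DifferentiableOn ℂ f Ω) (hfbij : Set.BijOn f Ω unitDisc) :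
    Filter.limsup
        (fun t : ℝ => ((dD (f w) (f (w + (t : ℂ))) / Real.log (-t) : ℝ) : EReal))
        Filter.atBot ≤ ((1 : ℝ) : EReal) := by
  set g : ℝ → ℝ := fun t ↦ Real.log (1 + |t| / (w.im - a)) / Real.log |t|
  have hg : Tendsto g atBot (𝓝 1) :=
    (tendsto_log_one_add_div_div_log (sub_pos.2 hw)).comp tendsto_abs_atBot_atTop
  have hmaps : MapsTo f {z | a < z.im} (ball 0 1) :=
    unitDisc_eq_ball ▸ hfbij.mapsTo.mono_left hH
  have hle : ∀ᶠ t : ℝ in atBot,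
      ((dD (f w) (f (w + t)) / Real.log (-t) : ℝ) : EReal) ≤ ((g t : ℝ) : EReal) := by
    filter_upwards [eventually_lt_atBot (-1)] with t ht
    rw [EReal.coe_le_coe_iff, Real.log_neg_eq_log, ← Real.log_abs]
    exact div_le_div_of_nonneg_right (dD_le_log_one_add_abs_div (hf.mono hH) hmaps hw t)
      (Real.log_nonneg (by rw [abs_of_neg (by linarith)]; linarith))
  calc limsup (fun t : ℝ ↦ ((dD (f w) (f (w + t)) / Real.log (-t) : ℝ) : EReal)) atBot
      ≤ limsup (fun t ↦ ((g t : ℝ) : EReal)) atBot := limsup_le_limsup hle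
    _ = ((1 : ℝ) : EReal) := (EReal.tendsto_coe.2 hg).limsup_eq

/-- Upper bound half of Theorem 4.3: if `Ω` contains the half-plane `{Im z > a}`
and `w` lies in that half-plane, then
`limsup_{t → -∞} d_Ω(w, w + t)/log(-t) ≤ 1`. -/
theorem stmt14 (Ω : Set ℂ) (hΩ : IsSCDomain Ω) (a : ℝ)
    (hH : {z : ℂ | a < z.im} ⊆ Ω) (w : ℂ) (hw : a < w.im)
    (f : ℂ → ℂ) (hf : DifferentiableOn ℂ f Ω) (hfbij : Set.BijOn f Ω unitDisc) :
    Filter.limsup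
        (fun t : ℝ => ((dD (f w) (f (w + (t : ℂ))) / Real.log (-t) : ℝ) : EReal))
        Filter.atBot ≤ ((1 : ℝ) : EReal) :=
  stmt14_general Ω a hH w hw f hf hfbij
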